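/- For every finite set P, every finite set Q of quartets over P, and every integer k ≥ 5, the graph G(P,Q) contains no induced cycle on k vertices. -/

import Mathlib

open SimpleGraph

/-- An induced matching of `G`: a set of edges of `G` that pairwise share no endpoint and
such that no edge of `G` joins an endpoint of one edge of the set to an endpoint of a
different edge of the set. -/
def IsInducedMatching {V : Type} (G : SimpleGraph V) (M : Set (Sym2 V)) : Prop :=
  M ⊆ G.edgeSet ∧
    ∀ e ∈ M, ∀ f ∈ M, e ≠ f → ∀ x ∈ e, ∀ y ∈ f, x ≠ y ∧ ¬ G.Adj x y

/-- The bipartite graph `G[A, Aᶜ]` consisting of the edges of `G` crossing the cut `(A, Aᶜ)`. -/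
def cutGraph {V : Type} (G : SimpleGraph V) (A : Set V) : SimpleGraph V where
  Adj x y := G.Adj x y ∧ ((x ∈ A ∧ y ∉ A) ∨ (x ∉ A ∧ y ∈ A))
  symm := by
    constructor
    rintro x y ⟨h, h'⟩
    exact ⟨h.symm, by tauto⟩
  loopless := by
    constructor
    rintro x ⟨h, -⟩
    exact G.ne_of_adj h rfl

/-- The graph `G − E[Xᶜ]`, obtained from `G` by deleting all edges with both endpoints
outside of `X`. -/
def delOutside {V : Type} (G : SimpleGraph V) (X : Set V) : SimpleGraph V where
  Adj x y := G.Adj x y ∧ (x ∈ X ∨ y ∈ X)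
  symm := by
    constructor
    rintro x y ⟨h, h'⟩
    exact ⟨h.symm, h'.symm⟩
  loopless := by
    constructor
    rintro x ⟨h, -⟩
    exact G.ne_of_adj h rfl

/-- The mim-value of the cut `(A, Aᶜ)`: the maximum size of an induced matching of `G[A, Aᶜ]`. -/
noncomputable def mimValue {V : Type} (G : SimpleGraph V) (A : Set V) : ℕ :=
  sSup {n | ∃ M : Set (Sym2 V), IsInducedMatching (cutGraph G A) M ∧ M.ncard = n}

/-- The sim-value of the cut `(A, Aᶜ)`: the maximum size of a set of crossing edges of `G`
that is an induced matching of `G`. -/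
noncomputable def simValue {V : Type} (G : SimpleGraph V) (A : Set V) : ℕ :=
  sSup {n | ∃ M : Set (Sym2 V), M ⊆ (cutGraph G A).edgeSet ∧
    IsInducedMatching G M ∧ M.ncard = n}

/-- The upper-induced matching number of `X`: the maximum size of a set of crossing edges of
`G` that is an induced matching of `G − E[Xᶜ]`. -/
noncomputable def upperIMN {V : Type} (G : SimpleGraph V) (X : Set V) : ℕ :=
  sSup {n | ∃ M : Set (Sym2 V), M ⊆ (cutGraph G X).edgeSet ∧
    IsInducedMatching (delOutside G X) M ∧ M.ncard = n}

/-- The omim-value of the cut `(A, Aᶜ)`. -/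
noncomputable def omimValue {V : Type} (G : SimpleGraph V) (A : Set V) : ℕ :=
  min (upperIMN G A) (upperIMN G Aᶜ)

/-- The Omim-value of the cut `(A, Aᶜ)`. -/
noncomputable def bigOmimValue {V : Type} (G : SimpleGraph V) (A : Set V) : ℕ :=
  max (upperIMN G A) (upperIMN G Aᶜ)

/-- A branch decomposition over a vertex set `V`: a finite ternary tree (every vertex has
degree 1 or 3) together with a bijection from `V` to its set of leaves. -/
structure BranchDecomp (V : Type) : Type 1 where
  τ : Type
  tree : SimpleGraph τ
  finite : Finite τ
  isTree : tree.IsTree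
  ternary : ∀ t : τ, (tree.neighborSet t).ncard = 1 ∨ (tree.neighborSet t).ncard = 3
  toLeaf : V → τ
  leafBij : Set.BijOn toLeaf Set.univ {t | (tree.neighborSet t).ncard = 1}

/-- The side of the cut induced by the tree edge `xy` that contains the endpoint `x`:
the set of vertices of `V` whose leaf lies in the component of `T − xy` containing `x`. -/
def BranchDecomp.side {V : Type} (D : BranchDecomp V) (x y : D.τ) : Set V :=
  {v | (D.tree.deleteEdges {s(x, y)}).Reachable (D.toLeaf v) x}

/-- The width of a branch decomposition with respect to a cut-value function `val`:
the maximum of `val` over all cuts induced by edges of the tree. -/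
noncomputable def BranchDecomp.width {V : Type} (D : BranchDecomp V) (val : Set V → ℕ) : ℕ :=
  sSup {n | ∃ x y : D.τ, D.tree.Adj x y ∧ n = val (D.side x y)}

/-- A branch decomposition is a caterpillar if its internal (degree-3) vertices induce a path. -/
def BranchDecomp.IsCaterpillar {V : Type} (D : BranchDecomp V) : Prop :=
  ∃ n : ℕ, Nonempty
    ((D.tree.induce {t | (D.tree.neighborSet t).ncard = 3}) ≃g SimpleGraph.pathGraph n)

noncomputable def mimWidth {V : Type} (G : SimpleGraph V) : ℕ :=
  sInf {n | ∃ D : BranchDecomp V, D.width (mimValue G) = n}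

noncomputable def simWidth {V : Type} (G : SimpleGraph V) : ℕ :=
  sInf {n | ∃ D : BranchDecomp V, D.width (simValue G) = n}

noncomputable def omimWidth {V : Type} (G : SimpleGraph V) : ℕ :=
  sInf {n | ∃ D : BranchDecomp V, D.width (omimValue G) = n}

noncomputable def bigOmimWidth {V : Type} (G : SimpleGraph V) : ℕ :=
  sInf {n | ∃ D : BranchDecomp V, D.width (bigOmimValue G) = n}

noncomputable def linMimWidth {V : Type} (G : SimpleGraph V) : ℕ :=
  sInf {n | ∃ D : BranchDecomp V, D.IsCaterpillar ∧ D.width (mimValue G) = n}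

noncomputable def linSimWidth {V : Type} (G : SimpleGraph V) : ℕ :=
  sInf {n | ∃ D : BranchDecomp V, D.IsCaterpillar ∧ D.width (simValue G) = n}

noncomputable def linOmimWidth {V : Type} (G : SimpleGraph V) : ℕ :=
  sInf {n | ∃ D : BranchDecomp V, D.IsCaterpillar ∧ D.width (omimValue G) = n}

noncomputable def linBigOmimWidth {V : Type} (G : SimpleGraph V) : ℕ :=
  sInf {n | ∃ D : BranchDecomp V, D.IsCaterpillar ∧ D.width (bigOmimValue G) = n}

/-- A quartet `[ab|cd]` over `P`: four pairwise distinct elements of `P`, partitioned into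
the two unordered pairs `{a, b}` and `{c, d}`. -/
structure Quartet (P : Type) where
  a : P
  b : P
  c : P
  d : P
  hab : a ≠ b
  hac : a ≠ c
  had : a ≠ d
  hbc : b ≠ c
  hbd : b ≠ d
  hcd : c ≠ d

/-- The four elements of a quartet, indexed by `Fin 4`. -/
def Quartet.elem {P : Type} (q : Quartet P) : Fin 4 → P := ![q.a, q.b, q.c, q.d]

/-- Whether two indices in `Fin 4` correspond to the same side (pair) of a quartet. -/
def sameSide (i j : Fin 4) : Prop := (i.val < 2 ∧ j.val < 2) ∨ (2 ≤ i.val ∧ 2 ≤ j.val)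

/-- A ternary tree with leaves labeled by `P` satisfies the quartet `[ab|cd]` if some edge of
the tree separates the leaves labeled `a, b` from the leaves labeled `c, d`. -/
def BranchDecomp.Satisfies {P : Type} (D : BranchDecomp P) (q : Quartet P) : Prop :=
  ∃ x y : D.τ, D.tree.Adj x y ∧
    q.a ∈ D.side x y ∧ q.b ∈ D.side x y ∧ q.c ∉ D.side x y ∧ q.d ∉ D.side x y

/-- A linear order `le` on `P` satisfies the quartet `[ab|cd]` if both `a` and `b` are
smaller than both `c` and `d`, or both `c` and `d` are smaller than both `a` and `b`. -/
def OrdSatisfies {P : Type} (le : P → P → Prop) (q : Quartet P) : Prop :=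
  (le q.a q.c ∧ le q.a q.d ∧ le q.b q.c ∧ le q.b q.d) ∨
  (le q.c q.a ∧ le q.d q.a ∧ le q.c q.b ∧ le q.d q.b)

/-- The vertices of the graph `G(P, Q)`: the points of `P` together with the vertices
`u_x^q` for `q ∈ Q` and `x` one of the four elements of `q` (indexed by `Fin 4`). -/
inductive QVert (P : Type) (Q : Finset (Quartet P)) : Type
  | pt (p : P)
  | u (q : {q : Quartet P // q ∈ Q}) (i : Fin 4)

/-- Base relation generating the edges of `G(P, Q)`. -/
def qRel {P : Type} {Q : Finset (Quartet P)} : QVert P Q → QVert P Q → Prop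
  | QVert.pt p, QVert.u q i => p = q.1.elem i
  | QVert.u q i, QVert.u q' j => q = q' → sameSide i j
  | _, _ => False

/-- The graph `G(P, Q)` of the sim-width/omim-width/Omim-width reduction. -/
def quartetGraph (P : Type) (Q : Finset (Quartet P)) : SimpleGraph (QVert P Q) :=
  SimpleGraph.fromRel qRel

/-- The vertices of the graph `G'(P, Q)`: the points of `P`, the vertices `u_x^q`, and the
vertices `γ_x^q`. -/
inductive GpVert (P : Type) (Q : Finset (Quartet P)) : Type
  | pt (p : P)
  | u (q : {q : Quartet P // q ∈ Q}) (i : Fin 4)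
  | g (q : {q : Quartet P // q ∈ Q}) (i : Fin 4)

/-- Base relation generating the edges of `G'(P, Q)`. -/
def gpRel {P : Type} {Q : Finset (Quartet P)} : GpVert P Q → GpVert P Q → Prop
  | GpVert.pt p, GpVert.u q i => p = q.1.elem i
  | GpVert.pt p, GpVert.g q i => p = q.1.elem i
  | GpVert.u q i, GpVert.u q' j => q = q' → sameSide i j
  | GpVert.u q _, GpVert.g q' _ => q ≠ q'
  | GpVert.g q _, GpVert.u q' _ => q ≠ q'
  | GpVert.g _ _, GpVert.g _ _ => True
  | _, _ => False

/-- The graph `G'(P, Q)` of the mim-width reduction. -/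
def gpGraph (P : Type) (Q : Finset (Quartet P)) : SimpleGraph (GpVert P Q) :=
  SimpleGraph.fromRel gpRel

/-- Base relation generating the edges of `H(P, Q)`; the extra vertex `ω` is `none`,
adjacent exactly to the vertices of `U`. -/
def hRel {P : Type} {Q : Finset (Quartet P)} :
    Option (GpVert P Q) → Option (GpVert P Q) → Prop
  | some x, some y => gpRel x y
  | none, some (GpVert.u _ _) => True
  | _, _ => False

/-- The graph `H(P, Q)`, obtained from `G'(P, Q)` by adding a vertex `ω` adjacent to all of `U`. -/
def hGraph (P : Type) (Q : Finset (Quartet P)) : SimpleGraph (Option (GpVert P Q)) :=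
  SimpleGraph.fromRel hRel


section Stmt9Aux

lemma sameSide_refl (i : Fin 4) : sameSide i i := by unfold sameSide; omega

lemma sameSide_symm {i j : Fin 4} (h : sameSide i j) : sameSide j i := by
  unfold sameSide at *; omega

lemma sameSide_trans {i j l : Fin 4} (h1 : sameSide i j) (h2 : sameSide j l) :
    sameSide i l := by unfold sameSide at *; omega

lemma sameSide_of_not_not {i j l : Fin 4} (h1 : ¬ sameSide i j) (h2 : ¬ sameSide i l) :
    sameSide j l := by unfold sameSide at *; omega

lemma elem_injective {P : Type} (q : Quartet P) : Function.Injective q.elem := by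
  have h1 := q.hab; have h2 := q.hac; have h3 := q.had
  have h4 := q.hbc; have h5 := q.hbd; have h6 := q.hcd
  intro i j h
  fin_cases i <;> fin_cases j <;> simp_all [Quartet.elem]

variable {P : Type} {Q : Finset (Quartet P)}

lemma qadj_pt_pt (p p' : P) :
    ¬ (quartetGraph P Q).Adj (QVert.pt p) (QVert.pt p') := by
  rintro h
  rw [quartetGraph, SimpleGraph.fromRel_adj] at h
  rcases h with ⟨-, h | h⟩ <;> exact h

lemma qadj_pt_u (p : P) (q : {q : Quartet P // q ∈ Q}) (i : Fin 4) :
    (quartetGraph P Q).Adj (QVert.pt p) (QVert.u q i) ↔ p = q.1.elem i := by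
  rw [quartetGraph, SimpleGraph.fromRel_adj]
  constructor
  · rintro ⟨-, h | h⟩
    · exact h
    · exact h.elim
  · intro h
    exact ⟨by simp, Or.inl h⟩

lemma qadj_u_u (q q' : {q : Quartet P // q ∈ Q}) (i j : Fin 4) :
    (quartetGraph P Q).Adj (QVert.u q i) (QVert.u q' j) ↔
      (¬ (q = q' ∧ i = j)) ∧ (q = q' → sameSide i j) := by
  rw [quartetGraph, SimpleGraph.fromRel_adj]
  constructor
  · rintro ⟨hne, h | h⟩
    · exact ⟨fun hh => hne (by rw [hh.1, hh.2]), h⟩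
    · exact ⟨fun hh => hne (by rw [hh.1, hh.2]), fun hq => sameSide_symm (h hq.symm)⟩
  · rintro ⟨hne, h⟩
    refine ⟨fun hh => ?_, Or.inl h⟩
    injection hh with h1 h2
    exact hne ⟨h1, h2⟩

lemma not_qadj_u_u {q q' : {q : Quartet P // q ∈ Q}} {i j : Fin 4}
    (hne : ¬ (q = q' ∧ i = j))
    (h : ¬ (quartetGraph P Q).Adj (QVert.u q i) (QVert.u q' j)) :
    q = q' ∧ ¬ sameSide i j := by
  rw [qadj_u_u] at h
  by_cases hq : q = q'
  · exact ⟨hq, fun hs => h ⟨hne, fun _ => hs⟩⟩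
  · exact absurd ⟨hne, fun hh => absurd hh hq⟩ h

end Stmt9Aux

open Fin.NatCast Fin.CommRing

/-- For every `k ≥ 5`, the graph `G(P,Q)` contains no induced cycle on `k`
vertices. -/
theorem stmt9 {P : Type} [Fintype P] (Q : Finset (Quartet P)) (k : ℕ) (hk : 5 ≤ k) :
    ¬ ∃ S : Set (QVert P Q), S.ncard = k ∧
      Nonempty ((quartetGraph P Q).induce S ≃g SimpleGraph.cycleGraph k) := by
  rintro ⟨S, -, ⟨φ⟩⟩
  obtain ⟨m5, rfl⟩ : ∃ m, k = m + 5 := ⟨k - 5, by omega⟩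
  clear hk
  set G := quartetGraph P Q with hG
  set F : Fin (m5 + 5) → QVert P Q := fun i => ((φ.symm i : S) : QVert P Q) with hF
  have hFadj : ∀ i j : Fin (m5 + 5),
      G.Adj (F i) (F j) ↔ (SimpleGraph.cycleGraph (m5 + 5)).Adj i j := by
    intro i j
    exact φ.symm.map_rel_iff
  have hFinj : Function.Injective F := by
    intro i j h
    exact φ.symm.injective (Subtype.val_injective h)
  set f : ℕ → QVert P Q := fun n => F (n : Fin (m5 + 5)) with hf
  have hval1 : ∀ x : Fin (m5 + 5), x.val = 1 ↔ x = 1 := by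
    intro x
    rw [Fin.ext_iff, Fin.val_one', Nat.mod_eq_of_lt (by omega)]
  have hcast : ∀ a d : ℕ, ((a + d : ℕ) : Fin (m5 + 5)) = (a : Fin (m5 + 5)) + (d : Fin (m5 + 5)) := by
    intro a d; push_cast; ring
  have hadj : ∀ a d : ℕ, (G.Adj (f a) (f (a + d)) ↔
      (d % (m5 + 5) = 1 ∨ (d + 1) % (m5 + 5) = 0)) := by
    intro a d
    show G.Adj (F _) (F _) ↔ _
    rw [hFadj, SimpleGraph.cycleGraph_adj']
    have h1 : (((a + d : ℕ) : Fin (m5 + 5)) - ((a : ℕ) : Fin (m5 + 5))) = (d : Fin (m5 + 5)) := by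
      rw [hcast]; ring
    have h2 : (((a : ℕ) : Fin (m5 + 5)) - ((a + d : ℕ) : Fin (m5 + 5))) = -(d : Fin (m5 + 5)) := by
      rw [hcast]; ring
    rw [h1, h2, Fin.val_natCast, hval1, neg_eq_iff_eq_neg]
    have h4 : ((d : Fin (m5 + 5)) = -1) ↔ (d + 1) % (m5 + 5) = 0 := by
      rw [← Nat.dvd_iff_mod_eq_zero, ← Fin.natCast_eq_zero (a := d + 1)]
      constructor
      · intro h; push_cast; rw [h]; ring
      · intro h
        push_cast at h
        linear_combination h
    rw [h4]
    tauto
  have heq : ∀ a d : ℕ, f a = f (a + d) ↔ d % (m5 + 5) = 0 := by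
    intro a d
    rw [← Nat.dvd_iff_mod_eq_zero]
    constructor
    · intro h
      have h0 : ((a : ℕ) : Fin (m5 + 5)) = ((a + d : ℕ) : Fin (m5 + 5)) := hFinj h
      rw [hcast] at h0
      have hd0 : ((d : ℕ) : Fin (m5 + 5)) = 0 := by linear_combination -h0
      rwa [Fin.natCast_eq_zero] at hd0
    · rintro ⟨t, rfl⟩
      show F _ = F _
      congr 1
      rw [hcast]
      have hz : (((m5 + 5) * t : ℕ) : Fin (m5 + 5)) = 0 := by
        rw [Fin.natCast_eq_zero]; exact Dvd.intro t rfl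
      rw [hz, add_zero]
  have adj1 : ∀ m : ℕ, G.Adj (f m) (f (m + 1)) := fun m =>
    (hadj m 1).mpr (Or.inl (by rw [Nat.mod_eq_of_lt (by omega)]))
  have nadjD : ∀ a b : ℕ, b = a + 2 ∨ b = a + 3 → ¬ G.Adj (f a) (f b) := by
    rintro a b (rfl | rfl) h
    · rcases (hadj a 2).mp h with hh | hh <;> (rw [Nat.mod_eq_of_lt (by omega)] at hh; omega)
    · rcases (hadj a 3).mp h with hh | hh <;> (rw [Nat.mod_eq_of_lt (by omega)] at hh; omega)
  have neqD : ∀ a b : ℕ, b = a + 2 ∨ b = a + 3 → f a ≠ f b := by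
    rintro a b (rfl | rfl) h
    · have := (heq a 2).mp h; rw [Nat.mod_eq_of_lt (by omega)] at this; omega
    · have := (heq a 3).mp h; rw [Nat.mod_eq_of_lt (by omega)] at this; omega
  have noUUU : ∀ (m : ℕ) (q1 : {q : Quartet P // q ∈ Q}) (a1 : Fin 4) q2 a2 q3 a3,
      f (m+1) = QVert.u q1 a1 → f (m+2) = QVert.u q2 a2 → f (m+3) = QVert.u q3 a3 → False := by
    intro m q1 a1 q2 a2 q3 a3 h1 h2 h3
    have hne13 : ¬ (q1 = q3 ∧ a1 = a3) := by
      rintro ⟨rfl, rfl⟩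
      exact neqD (m+1) (m+3) (Or.inl (by omega)) (by rw [h1, h3])
    have h13 : q1 = q3 ∧ ¬ sameSide a1 a3 := by
      refine not_qadj_u_u hne13 ?_
      rw [← h1, ← h3]; exact nadjD (m+1) (m+3) (Or.inl (by omega))
    obtain ⟨rfl, hns13⟩ := h13
    have ha12 := adj1 (m+1)
    rw [show m+1+1 = m+2 by omega, h1, h2, qadj_u_u] at ha12
    have ha23 := adj1 (m+2)
    rw [show m+2+1 = m+3 by omega, h2, h3, qadj_u_u] at ha23
    by_cases hq12 : q1 = q2
    · exact hns13 (sameSide_trans (ha12.2 hq12) (ha23.2 hq12.symm))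
    · obtain ⟨p, hp⟩ : ∃ p, f m = QVert.pt p := by
        cases hfm : f m with
        | pt p => exact ⟨p, rfl⟩
        | u r x =>
          have hne : ¬ (r = q2 ∧ x = a2) := by
            rintro ⟨rfl, rfl⟩
            exact neqD m (m+2) (Or.inl rfl) (by rw [hfm, h2])
          have hr := not_qadj_u_u hne (by rw [← hfm, ← h2]; exact nadjD m (m+2) (Or.inl rfl))
          have hadj03 : G.Adj (f m) (f (m+3)) := by
            rw [hfm, h3, qadj_u_u]
            exact ⟨fun hh => hq12 (hh.1.symm.trans hr.1), fun hh => (hq12 (hh.symm.trans hr.1)).elim⟩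
          exact (nadjD m (m+3) (Or.inr rfl) hadj03).elim
      have hpval : p = q1.1.elem a1 := by
        have := adj1 m; rw [hp, h1, qadj_pt_u] at this; exact this
      obtain ⟨p', hp4, hp'val⟩ :
          ∃ p', f (m+4) = QVert.pt p' ∧ p' = q1.1.elem a3 := by
        cases hfm : f (m+4) with
        | u r x =>
          have hne : ¬ (q2 = r ∧ a2 = x) := by
            rintro ⟨rfl, rfl⟩
            exact neqD (m+2) (m+4) (Or.inl (by omega)) (by rw [h2, hfm])
          have hr := not_qadj_u_u hne
            (by rw [← h2, ← hfm]; exact nadjD (m+2) (m+4) (Or.inl (by omega)))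
          have hadj14 : G.Adj (f (m+1)) (f (m+4)) := by
            rw [h1, hfm, qadj_u_u]
            exact ⟨fun hh => hq12 (hh.1.trans hr.1.symm), fun hh => (hq12 (hh.trans hr.1.symm)).elim⟩
          exact ((nadjD (m+1) (m+4) (Or.inr (by omega)) hadj14)).elim
        | pt p' =>
          refine ⟨p', rfl, ?_⟩
          have := adj1 (m+3)
          rw [show m+3+1 = m+4 by omega, h3, hfm] at this
          exact (qadj_pt_u p' q1 a3).mp this.symm
      rcases Nat.eq_zero_or_pos m5 with rfl | h5
      · have hadj04 : G.Adj (f m) (f (m+4)) := (hadj m 4).mpr (Or.inr (by norm_num))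
        rw [hp, hp4] at hadj04
        exact qadj_pt_pt _ _ hadj04
      · cases hfm5 : f (m+5) with
        | pt p'' =>
          have := adj1 (m+4)
          rw [show m+4+1 = m+5 by omega, hp4, hfm5] at this
          exact qadj_pt_pt _ _ this
        | u r x =>
          have hrx : p' = r.1.elem x := by
            have := adj1 (m+4)
            rw [show m+4+1 = m+5 by omega, hp4, hfm5, qadj_pt_u] at this
            exact this
          have hne : ¬ (q1 = r ∧ a3 = x) := by
            rintro ⟨rfl, rfl⟩
            exact neqD (m+3) (m+5) (Or.inl (by omega)) (by rw [h3, hfm5])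
          obtain ⟨hq1r, hns⟩ := not_qadj_u_u hne
            (by rw [← h3, ← hfm5]; exact nadjD (m+3) (m+5) (Or.inl (by omega)))
          have hxx : q1.1.elem a3 = q1.1.elem x := by rw [← hp'val, hrx, ← hq1r]
          have hax : a3 = x := elem_injective q1.1 hxx
          exact hns (hax ▸ sameSide_refl a3)
  have step : ∀ (m : ℕ) (p : P), f m = QVert.pt p →
      ∃ q1 a1 q2 a2 p3, f (m+1) = QVert.u q1 a1 ∧ f (m+2) = QVert.u q2 a2 ∧
        f (m+3) = QVert.pt p3 := by
    intro m p hp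
    obtain ⟨q1, a1, h1⟩ : ∃ q1 a1, f (m+1) = QVert.u q1 a1 := by
      cases hfm : f (m+1) with
      | pt p' =>
        have := adj1 m; rw [hp, hfm] at this
        exact (qadj_pt_pt _ _ this).elim
      | u q i => exact ⟨q, i, rfl⟩
    obtain ⟨q2, a2, h2⟩ : ∃ q2 a2, f (m+2) = QVert.u q2 a2 := by
      cases hfm : f (m+2) with
      | pt p' =>
        have e1 : p = q1.1.elem a1 := by
          have := adj1 m; rw [hp, h1, qadj_pt_u] at this; exact this
        have e2 : p' = q1.1.elem a1 := by
          have := adj1 (m+1)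
          rw [show m+1+1 = m+2 by omega, h1, hfm] at this
          exact (qadj_pt_u _ _ _).mp this.symm
        exact absurd (by rw [hp, hfm, e1, e2] : f m = f (m+2)) (neqD m (m+2) (Or.inl rfl))
      | u q i => exact ⟨q, i, rfl⟩
    obtain ⟨p3, h3⟩ : ∃ p3, f (m+3) = QVert.pt p3 := by
      cases hfm : f (m+3) with
      | u q i => exact (noUUU m q1 a1 q2 a2 q i h1 h2 hfm).elim
      | pt p3 => exact ⟨p3, rfl⟩
    exact ⟨q1, a1, q2, a2, p3, h1, h2, h3⟩
  obtain ⟨m0, p0, hp0⟩ : ∃ m p, f m = QVert.pt p := by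
    by_contra hc
    push_neg at hc
    have hu : ∀ m : ℕ, ∃ q i, f m = QVert.u q i := by
      intro m
      cases hfm : f m with
      | pt p => exact absurd hfm (hc m p)
      | u q i => exact ⟨q, i, rfl⟩
    obtain ⟨q1, a1, h1⟩ := hu 1
    obtain ⟨q2, a2, h2⟩ := hu 2
    obtain ⟨q3, a3, h3⟩ := hu 3
    exact noUUU 0 q1 a1 q2 a2 q3 a3 h1 h2 h3
  have pat : ∀ t : ℕ, ∃ p, f (m0 + 3 * t) = QVert.pt p := by
    intro t
    induction t with
    | zero => exact ⟨p0, by rw [show m0 + 3*0 = m0 by omega]; exact hp0⟩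
    | succ t ih =>
      obtain ⟨p, hp⟩ := ih
      obtain ⟨q1, a1, q2, a2, p3, -, -, h3⟩ := step _ _ hp
      exact ⟨p3, by rw [show m0 + 3*(t+1) = m0 + 3*t + 3 by omega]; exact h3⟩
  have hfK : f (m0 + (m5 + 5)) = QVert.pt p0 := by
    rw [← (heq m0 (m5 + 5)).mpr (Nat.mod_self _)]; exact hp0
  have hK3 : (m5+5) % 3 = 0 ∨ (m5+5) % 3 = 1 ∨ (m5+5) % 3 = 2 := by omega
  rcases hK3 with hK3 | hK3 | hK3
  · -- 3 divides k
    obtain ⟨q1, a1, q2, a2, p3', h1, h2, h3'⟩ := step m0 p0 hp0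
    obtain ⟨q3, b1, q4, b2, p6, h4, h5, h6⟩ := step (m0+3) p3' h3'
    rw [show m0+3+1 = m0+4 by omega] at h4
    rw [show m0+3+2 = m0+5 by omega] at h5
    rw [show m0+3+3 = m0+6 by omega] at h6
    have hne14 : ¬ (q1 = q3 ∧ a1 = b1) := by
      rintro ⟨rfl, rfl⟩
      exact neqD (m0+1) (m0+4) (Or.inr (by omega)) (by rw [h1, h4])
    obtain ⟨e14, ns14⟩ := not_qadj_u_u hne14
      (by rw [← h1, ← h4]; exact nadjD (m0+1) (m0+4) (Or.inr (by omega)))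
    have hne24 : ¬ (q2 = q3 ∧ a2 = b1) := by
      rintro ⟨rfl, rfl⟩
      exact neqD (m0+2) (m0+4) (Or.inl (by omega)) (by rw [h2, h4])
    obtain ⟨e24, ns24⟩ := not_qadj_u_u hne24
      (by rw [← h2, ← h4]; exact nadjD (m0+2) (m0+4) (Or.inl (by omega)))
    have hne25 : ¬ (q2 = q4 ∧ a2 = b2) := by
      rintro ⟨rfl, rfl⟩
      exact neqD (m0+2) (m0+5) (Or.inr (by omega)) (by rw [h2, h5])
    obtain ⟨e25, ns25⟩ := not_qadj_u_u hne25
      (by rw [← h2, ← h5]; exact nadjD (m0+2) (m0+5) (Or.inr (by omega)))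
    have ha12 := adj1 (m0+1)
    rw [show m0+1+1 = m0+2 by omega, h1, h2, qadj_u_u] at ha12
    have hs12 : sameSide a1 a2 := ha12.2 (e14.trans e24.symm)
    have hpa1 : p0 = q1.1.elem a1 := by
      have := adj1 m0; rw [hp0, h1, qadj_pt_u] at this; exact this
    by_cases h6' : m5 = 1
    · subst h6'
      have hadj05 : G.Adj (f m0) (f (m0+5)) := (hadj m0 5).mpr (Or.inr (by norm_num))
      rw [hp0, h5, qadj_pt_u] at hadj05
      have e1x : q1 = q4 := (e14.trans e24.symm).trans e25
      have hxx : q1.1.elem a1 = q1.1.elem b2 := by rw [← hpa1, hadj05, ← e1x]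
      have hab : a1 = b2 := elem_injective q1.1 hxx
      exact ns25 (sameSide_symm (hab ▸ hs12))
    · have hK9 : 9 ≤ m5 + 5 := by omega
      obtain ⟨q5, c1, -, -, -, h7, -, -⟩ := step (m0+6) p6 h6
      rw [show m0+6+1 = m0+7 by omega] at h7
      have hne47 : ¬ (q3 = q5 ∧ b1 = c1) := by
        rintro ⟨rfl, rfl⟩
        exact neqD (m0+4) (m0+7) (Or.inr (by omega)) (by rw [h4, h7])
      obtain ⟨e47, ns47⟩ := not_qadj_u_u hne47
        (by rw [← h4, ← h7]; exact nadjD (m0+4) (m0+7) (Or.inr (by omega)))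
      have hne17 : ¬ (q1 = q5 ∧ a1 = c1) := by
        rintro ⟨rfl, rfl⟩
        have := (heq (m0+1) 6).mp (by rw [show m0+1+6 = m0+7 by omega, h1, h7])
        rw [Nat.mod_eq_of_lt (by omega)] at this; omega
      have hnadj17 : ¬ G.Adj (f (m0+1)) (f (m0+7)) := by
        intro h
        rcases (hadj (m0+1) 6).mp (by rw [show m0+1+6 = m0+7 by omega]; exact h) with hh | hh <;>
          (rw [Nat.mod_eq_of_lt (by omega)] at hh; omega)
      obtain ⟨e17, ns17⟩ := not_qadj_u_u hne17 (by rw [← h1, ← h7]; exact hnadj17)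
      exact ns47 (sameSide_of_not_not ns14 ns17)
  · -- k ≡ 1 mod 3
    obtain ⟨p, hp⟩ := pat ((m5+5)/3)
    obtain ⟨q1, a1, -, -, -, h1, -, -⟩ := step _ _ hp
    rw [show m0 + 3*((m5+5)/3) + 1 = m0 + (m5+5) by omega, hfK] at h1
    cases h1
  · -- k ≡ 2 mod 3
    obtain ⟨p, hp⟩ := pat ((m5+5)/3)
    obtain ⟨-, -, q2, a2, -, -, h2, -⟩ := step _ _ hp
    rw [show m0 + 3*((m5+5)/3) + 2 = m0 + (m5+5) by omega, hfK] at h2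
    cases h2
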